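/- arXiv:2305.06657 — 4 statements merged into one kernel-verified Lean document; each statement's English description precedes it below -/
import Mathlib

section
/- The adjacent robust Bellman operator T is a γ-contraction with respect to the ℓ∞-norm: for any two functions Q1, Q2 : S × A → ℝ, one has max_{(s,a) ∈ S × A} |T Q1(s,a) − T Q2(s,a)| ≤ γ · max_{(s,a) ∈ S × A} |Q1(s,a) − Q2(s,a)|. -/
open Finset

/-- Value function `V_Q(s) = min_{a ∈ A} Q(s,a)`. -/
noncomputable def Vq {S A : Type*} [Fintype A] [Nonempty A] (Q : S → A → ℝ) (s : S) : ℝ :=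
  Finset.univ.inf' Finset.univ_nonempty (fun a => Q s a)

open Classical in
/-- Neighboring set `N_s = {s' : ∑_a p̄(s,a)(s') ≠ 0}`. -/
noncomputable def nbr {S A : Type*} [Fintype S] [Fintype A] (pbar : S → A → S → ℝ) (s : S) :
    Finset S :=
  Finset.univ.filter (fun s' => (∑ a, pbar s a s') ≠ 0)

/-- ℓ∞-norm `‖Q‖∞ = max_{(s,a)} |Q(s,a)|`. -/
noncomputable def supNorm {S A : Type*} [Fintype S] [Fintype A] [Nonempty S] [Nonempty A]
    (Q : S → A → ℝ) : ℝ :=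
  Finset.univ.sup' Finset.univ_nonempty (fun p : S × A => |Q p.1 p.2|)

/-- Adjacent robust Bellman operator. -/
noncomputable def Tadj {S A : Type*} [Fintype S] [Fintype A] [Nonempty A]
    (c : S → A → ℝ) (γ R : ℝ) (pbar : S → A → S → ℝ)
    (hNne : ∀ s, (nbr pbar s).Nonempty) (Q : S → A → ℝ) (s : S) (a : A) : ℝ :=
  c s a + γ * (1 - R) * (∑ s', pbar s a s' * Vq Q s')
    + γ * R * (nbr pbar s).sup' (hNne s) (Vq Q)

/-- the adjacent robust Bellman operator is a `γ`-contraction in `ℓ∞`. -/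
theorem adjacent_bellman_contraction
    {S A : Type*} [Fintype S] [Fintype A] [Nonempty S] [Nonempty A]
    (c : S → A → ℝ) (γ R : ℝ) (hγ0 : 0 < γ) (hγ1 : γ < 1) (hR0 : 0 ≤ R) (hR1 : R ≤ 1)
    (pbar : S → A → S → ℝ)
    (hp_nonneg : ∀ s a s', 0 ≤ pbar s a s')
    (hp_sum : ∀ s a, ∑ s', pbar s a s' = 1)
    (hself : ∀ s : S, s ∈ nbr pbar s)
    (Q1 Q2 : S → A → ℝ) :
    supNorm (fun s a =>
        Tadj c γ R pbar (fun s => ⟨s, hself s⟩) Q1 s a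
          - Tadj c γ R pbar (fun s => ⟨s, hself s⟩) Q2 s a)
      ≤ γ * supNorm (fun s a => Q1 s a - Q2 s a) := by
  set K := supNorm (fun s a => Q1 s a - Q2 s a) with hK
  have hKdef : ∀ s a, |Q1 s a - Q2 s a| ≤ K := by
    intro s a
    exact Finset.le_sup' (f := fun p : S × A => |Q1 p.1 p.2 - Q2 p.1 p.2|)
      (b := (s, a)) (Finset.mem_univ _)
  have hV : ∀ (P1 P2 : S → A → ℝ), (∀ s a, |P1 s a - P2 s a| ≤ K) →
      ∀ s, Vq P1 s - Vq P2 s ≤ K := by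
    intro P1 P2 h s
    obtain ⟨a, -, ha⟩ := Finset.exists_mem_eq_inf' (Finset.univ_nonempty) (fun a => P2 s a)
    have h1 : Vq P1 s ≤ P1 s a := Finset.inf'_le _ (Finset.mem_univ a)
    have h2 : P1 s a - P2 s a ≤ K := (abs_le.mp (h s a)).2
    have : Vq P2 s = P2 s a := ha
    linarith
  have hVabs : ∀ s, |Vq Q1 s - Vq Q2 s| ≤ K := by
    intro s
    rw [abs_le]
    constructor
    · have := hV Q2 Q1 (fun s a => by rw [abs_sub_comm]; exact hKdef s a) s
      linarith
    · exact hV Q1 Q2 hKdef s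
  have hSup : ∀ s, |(nbr pbar s).sup' ⟨s, hself s⟩ (Vq Q1)
      - (nbr pbar s).sup' ⟨s, hself s⟩ (Vq Q2)| ≤ K := by
    intro s
    rw [abs_le]
    have key : ∀ (P1 P2 : S → A → ℝ), (∀ s', |Vq P1 s' - Vq P2 s'| ≤ K) →
        (nbr pbar s).sup' ⟨s, hself s⟩ (Vq P1)
          - (nbr pbar s).sup' ⟨s, hself s⟩ (Vq P2) ≤ K := by
      intro P1 P2 h
      rw [sub_le_iff_le_add]
      apply Finset.sup'_le
      intro s' hs'
      have h1 : Vq P1 s' - Vq P2 s' ≤ K := (abs_le.mp (h s')).2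
      have h2 : Vq P2 s' ≤ (nbr pbar s).sup' ⟨s, hself s⟩ (Vq P2) :=
        Finset.le_sup' _ hs'
      linarith
    constructor
    · have := key Q2 Q1 (fun s' => by rw [abs_sub_comm]; exact hVabs s')
      linarith
    · exact key Q1 Q2 hVabs
  have hK0 : 0 ≤ K := le_trans (abs_nonneg _) (hKdef Classical.ofNonempty Classical.ofNonempty)
  apply Finset.sup'_le
  rintro ⟨s, a⟩ -
  simp only [Tadj]
  have hdiff : c s a + γ * (1 - R) * (∑ s', pbar s a s' * Vq Q1 s')
      + γ * R * (nbr pbar s).sup' ⟨s, hself s⟩ (Vq Q1)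
      - (c s a + γ * (1 - R) * (∑ s', pbar s a s' * Vq Q2 s')
      + γ * R * (nbr pbar s).sup' ⟨s, hself s⟩ (Vq Q2))
      = γ * (1 - R) * (∑ s', pbar s a s' * (Vq Q1 s' - Vq Q2 s'))
      + γ * R * ((nbr pbar s).sup' ⟨s, hself s⟩ (Vq Q1)
          - (nbr pbar s).sup' ⟨s, hself s⟩ (Vq Q2)) := by
    have hsum : (∑ s', pbar s a s' * (Vq Q1 s' - Vq Q2 s'))
        = (∑ s', pbar s a s' * Vq Q1 s') - ∑ s', pbar s a s' * Vq Q2 s' := by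
      simp [mul_sub, Finset.sum_sub_distrib]
    rw [hsum]; ring
  rw [hdiff]
  have h1 : |γ * (1 - R) * (∑ s', pbar s a s' * (Vq Q1 s' - Vq Q2 s'))| ≤ γ * (1 - R) * K := by
    rw [abs_mul, abs_of_nonneg (by nlinarith : (0:ℝ) ≤ γ * (1 - R))]
    apply mul_le_mul_of_nonneg_left _ (by nlinarith)
    calc |∑ s', pbar s a s' * (Vq Q1 s' - Vq Q2 s')|
        ≤ ∑ s', |pbar s a s' * (Vq Q1 s' - Vq Q2 s')| := Finset.abs_sum_le_sum_abs _ _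
      _ ≤ ∑ s', pbar s a s' * K := by
          apply Finset.sum_le_sum
          intro s' _
          rw [abs_mul, abs_of_nonneg (hp_nonneg s a s')]
          exact mul_le_mul_of_nonneg_left (hVabs s') (hp_nonneg s a s')
      _ = K := by rw [← Finset.sum_mul, hp_sum, one_mul]
  have h2 : |γ * R * ((nbr pbar s).sup' ⟨s, hself s⟩ (Vq Q1)
      - (nbr pbar s).sup' ⟨s, hself s⟩ (Vq Q2))| ≤ γ * R * K := by
    rw [abs_mul, abs_of_nonneg (by positivity : (0:ℝ) ≤ γ * R)]
    exact mul_le_mul_of_nonneg_left (hSup s) (by positivity)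
  calc |_ + _| ≤ _ + _ := abs_add_le _ _
    _ ≤ γ * (1 - R) * K + γ * R * K := add_le_add h1 h2
    _ = γ * K := by ring
end

section
/- The adjacent robust Bellman operator T has a unique fixed point: there exists exactly one function Q⋆ : S × A → ℝ such that T Q⋆ = Q⋆. -/
open Finset

private lemma inf'_lip {ι : Type*} (t : Finset ι) (ht : t.Nonempty) (f g : ι → ℝ) (D : ℝ)
    (h : ∀ i ∈ t, |f i - g i| ≤ D) : |t.inf' ht f - t.inf' ht g| ≤ D := by
  rw [abs_sub_le_iff]
  constructor
  · obtain ⟨i, hi, hgi⟩ := t.exists_mem_eq_inf' ht g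
    have h1 : t.inf' ht f ≤ f i := Finset.inf'_le _ hi
    have h2 := (abs_sub_le_iff.mp (h i hi)).1
    rw [hgi]; linarith
  · obtain ⟨i, hi, hfi⟩ := t.exists_mem_eq_inf' ht f
    have h1 : t.inf' ht g ≤ g i := Finset.inf'_le _ hi
    have h2 := (abs_sub_le_iff.mp (h i hi)).2
    rw [hfi]; linarith

private lemma sup'_lip {ι : Type*} (t : Finset ι) (ht : t.Nonempty) (f g : ι → ℝ) (D : ℝ)
    (h : ∀ i ∈ t, |f i - g i| ≤ D) : |t.sup' ht f - t.sup' ht g| ≤ D := by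
  rw [abs_sub_le_iff]
  constructor
  · obtain ⟨i, hi, hfi⟩ := t.exists_mem_eq_sup' ht f
    have h1 : g i ≤ t.sup' ht g := Finset.le_sup' _ hi
    have h2 := (abs_sub_le_iff.mp (h i hi)).1
    rw [hfi]; linarith
  · obtain ⟨i, hi, hgi⟩ := t.exists_mem_eq_sup' ht g
    have h1 : f i ≤ t.sup' ht f := Finset.le_sup' _ hi
    have h2 := (abs_sub_le_iff.mp (h i hi)).2
    rw [hgi]; linarith

/-- the adjacent robust Bellman operator has a unique fixed point. -/
theorem adjacent_bellman_unique_fixed_point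
    {S A : Type*} [Fintype S] [Fintype A] [Nonempty S] [Nonempty A]
    (c : S → A → ℝ) (γ R : ℝ) (hγ0 : 0 < γ) (hγ1 : γ < 1) (hR0 : 0 ≤ R) (hR1 : R ≤ 1)
    (pbar : S → A → S → ℝ)
    (hp_nonneg : ∀ s a s', 0 ≤ pbar s a s')
    (hp_sum : ∀ s a, ∑ s', pbar s a s' = 1)
    (hself : ∀ s : S, s ∈ nbr pbar s) :
    ∃! Qstar : S → A → ℝ, Tadj c γ R pbar (fun s => ⟨s, hself s⟩) Qstar = Qstar := by
  set hNne : ∀ s, (nbr pbar s).Nonempty := fun s => ⟨s, hself s⟩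
  set F : (S → A → ℝ) → (S → A → ℝ) := Tadj c γ R pbar hNne with hF
  have hlip : LipschitzWith ⟨γ, hγ0.le⟩ F := by
    apply LipschitzWith.of_dist_le_mul
    intro Q Q'
    set D := dist Q Q' with hD
    have hD0 : 0 ≤ D := dist_nonneg
    have hQ : ∀ s a, |Q s a - Q' s a| ≤ D := by
      intro s a
      calc |Q s a - Q' s a| = dist (Q s a) (Q' s a) := (Real.dist_eq _ _).symm
        _ ≤ dist (Q s) (Q' s) := dist_le_pi_dist (Q s) (Q' s) a
        _ ≤ D := dist_le_pi_dist Q Q' s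
    have hV : ∀ s, |Vq Q s - Vq Q' s| ≤ D := fun s =>
      inf'_lip _ _ _ _ _ (fun a _ => hQ s a)
    have key : ∀ s a, dist (F Q s a) (F Q' s a) ≤ γ * D := by
      intro s a
      rw [Real.dist_eq]
      have hsum : |(∑ s', pbar s a s' * Vq Q s') - ∑ s', pbar s a s' * Vq Q' s'| ≤ D := by
        rw [← Finset.sum_sub_distrib]
        calc |∑ s', (pbar s a s' * Vq Q s' - pbar s a s' * Vq Q' s')|
            ≤ ∑ s', |pbar s a s' * Vq Q s' - pbar s a s' * Vq Q' s'| :=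
              Finset.abs_sum_le_sum_abs _ _
          _ ≤ ∑ s', pbar s a s' * D := by
              apply Finset.sum_le_sum
              intro s' _
              rw [← mul_sub, abs_mul, abs_of_nonneg (hp_nonneg s a s')]
              exact mul_le_mul_of_nonneg_left (hV s') (hp_nonneg s a s')
          _ = D := by rw [← Finset.sum_mul, hp_sum, one_mul]
      have hsup : |(nbr pbar s).sup' (hNne s) (Vq Q) - (nbr pbar s).sup' (hNne s) (Vq Q')| ≤ D :=
        sup'_lip _ _ _ _ _ (fun s' _ => hV s')
      have expand : F Q s a - F Q' s a =
          γ * (1 - R) * ((∑ s', pbar s a s' * Vq Q s') - ∑ s', pbar s a s' * Vq Q' s')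
          + γ * R * ((nbr pbar s).sup' (hNne s) (Vq Q) - (nbr pbar s).sup' (hNne s) (Vq Q')) := by
        simp only [hF, Tadj]; ring
      rw [expand]
      have h1R : (0:ℝ) ≤ 1 - R := by linarith
      calc |γ * (1 - R) * ((∑ s', pbar s a s' * Vq Q s') - ∑ s', pbar s a s' * Vq Q' s')
          + γ * R * ((nbr pbar s).sup' (hNne s) (Vq Q) - (nbr pbar s).sup' (hNne s) (Vq Q'))|
          ≤ |γ * (1 - R) * ((∑ s', pbar s a s' * Vq Q s') - ∑ s', pbar s a s' * Vq Q' s')|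
          + |γ * R * ((nbr pbar s).sup' (hNne s) (Vq Q) - (nbr pbar s).sup' (hNne s) (Vq Q'))| :=
            abs_add_le _ _
        _ ≤ γ * (1 - R) * D + γ * R * D := by
            gcongr
            · rw [abs_mul, abs_of_nonneg (by positivity : (0:ℝ) ≤ γ * (1 - R))]
              exact mul_le_mul_of_nonneg_left hsum (by positivity)
            · rw [abs_mul, abs_of_nonneg (by positivity : (0:ℝ) ≤ γ * R)]
              exact mul_le_mul_of_nonneg_left hsup (by positivity)
        _ = γ * D := by ring
    have hγD : 0 ≤ γ * D := by positivity
    calc dist (F Q) (F Q') ≤ γ * D := by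
          rw [dist_pi_le_iff hγD]
          intro s
          rw [dist_pi_le_iff hγD]
          exact key s
      _ = (⟨γ, hγ0.le⟩ : NNReal) * dist Q Q' := rfl
  have hcontr : ContractingWith ⟨γ, hγ0.le⟩ F := ⟨by exact_mod_cast hγ1, hlip⟩
  refine ⟨hcontr.fixedPoint F, hcontr.fixedPoint_isFixedPt, fun y hy => ?_⟩
  exact hcontr.fixedPoint_unique hy
end

section
/- The R-contamination robust Bellman operator T', defined by (T' Q)(s,a) = c(s,a) + γ(1−R) ∑_{s' ∈ S} p̄(s,a)(s') V_Q(s') + γ R max_{s' ∈ S} V_Q(s'), is a γ-contraction with respect to the ℓ∞-norm: for any Q1, Q2 : S × A → ℝ, ‖T' Q1 − T' Q2‖∞ ≤ γ ‖Q1 − Q2‖∞. -/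
open Finset

/-- The `R`-contamination robust Bellman operator. -/
noncomputable def Tcon {S A : Type*} [Fintype S] [Fintype A] [Nonempty S] [Nonempty A]
    (c : S → A → ℝ) (γ R : ℝ) (pbar : S → A → S → ℝ) (Q : S → A → ℝ) (s : S) (a : A) : ℝ :=
  c s a + γ * (1 - R) * (∑ s', pbar s a s' * Vq Q s')
    + γ * R * Finset.univ.sup' Finset.univ_nonempty (Vq Q)


lemma Vq_abs_le {S A : Type*} [Fintype S] [Fintype A] [Nonempty S] [Nonempty A]
    (Q1 Q2 : S → A → ℝ) (s : S) :
    |Vq Q1 s - Vq Q2 s| ≤ supNorm (fun s a => Q1 s a - Q2 s a) := by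
  have key : ∀ (f g : S → A → ℝ), Vq f s - Vq g s ≤ supNorm (fun s a => f s a - g s a) := by
    intro f g
    obtain ⟨a, _, ha⟩ := Finset.exists_mem_eq_inf' (Finset.univ_nonempty (α := A)) (fun a => g s a)
    have h1 : Vq f s ≤ f s a := Finset.inf'_le _ (Finset.mem_univ a)
    have h2 : f s a - g s a ≤ |f s a - g s a| := le_abs_self _
    have h3 : |f s a - g s a| ≤ supNorm (fun s a => f s a - g s a) :=
      Finset.le_sup' (f := fun p : S × A => |f p.1 p.2 - g p.1 p.2|) (Finset.mem_univ (s, a))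
    have : Vq g s = g s a := ha
    linarith
  have h1 := key Q1 Q2
  have h2 := key Q2 Q1
  have : supNorm (fun s a => Q2 s a - Q1 s a) = supNorm (fun s a => Q1 s a - Q2 s a) := by
    simp [supNorm, abs_sub_comm]
  rw [abs_sub_le_iff]
  constructor
  · exact h1
  · linarith

lemma sup'_Vq_abs_le {S A : Type*} [Fintype S] [Fintype A] [Nonempty S] [Nonempty A]
    (Q1 Q2 : S → A → ℝ) :
    |Finset.univ.sup' Finset.univ_nonempty (Vq Q1)
      - Finset.univ.sup' Finset.univ_nonempty (Vq Q2)|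
      ≤ supNorm (fun s a => Q1 s a - Q2 s a) := by
  have key : ∀ (f g : S → A → ℝ),
      Finset.univ.sup' Finset.univ_nonempty (Vq f)
        - Finset.univ.sup' Finset.univ_nonempty (Vq g)
        ≤ supNorm (fun s a => f s a - g s a) := by
    intro f g
    obtain ⟨s, _, hs⟩ := Finset.exists_mem_eq_sup' (Finset.univ_nonempty (α := S)) (Vq f)
    have h1 : Vq g s ≤ Finset.univ.sup' Finset.univ_nonempty (Vq g) :=
      Finset.le_sup' _ (Finset.mem_univ s)
    have h2 := Vq_abs_le f g s
    have h3 : Vq f s - Vq g s ≤ |Vq f s - Vq g s| := le_abs_self _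
    rw [hs] at *
    linarith
  have h1 := key Q1 Q2
  have h2 := key Q2 Q1
  have : supNorm (fun s a => Q2 s a - Q1 s a) = supNorm (fun s a => Q1 s a - Q2 s a) := by
    simp [supNorm, abs_sub_comm]
  rw [abs_sub_le_iff]
  constructor
  · exact h1
  · linarith

/-- the `R`-contamination robust Bellman operator is a `γ`-contraction in `ℓ∞`. -/
theorem contamination_bellman_contraction
    {S A : Type*} [Fintype S] [Fintype A] [Nonempty S] [Nonempty A]
    (c : S → A → ℝ) (γ R : ℝ) (hγ0 : 0 < γ) (hγ1 : γ < 1) (hR0 : 0 ≤ R) (hR1 : R ≤ 1)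
    (pbar : S → A → S → ℝ)
    (hp_nonneg : ∀ s a s', 0 ≤ pbar s a s')
    (hp_sum : ∀ s a, ∑ s', pbar s a s' = 1)
    (Q1 Q2 : S → A → ℝ) :
    supNorm (fun s a => Tcon c γ R pbar Q1 s a - Tcon c γ R pbar Q2 s a)
      ≤ γ * supNorm (fun s a => Q1 s a - Q2 s a) := by
  set M := supNorm (fun s a => Q1 s a - Q2 s a) with hM
  have hM0 : 0 ≤ M := by
    obtain ⟨p, _, hp⟩ := Finset.exists_mem_eq_sup' (Finset.univ_nonempty (α := S × A))
      (fun p : S × A => |Q1 p.1 p.2 - Q2 p.1 p.2|)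
    rw [hM, supNorm, hp]; positivity
  apply Finset.sup'_le
  intro p _
  obtain ⟨s, a⟩ := p
  show |Tcon c γ R pbar Q1 s a - Tcon c γ R pbar Q2 s a| ≤ γ * M
  have hdiff : Tcon c γ R pbar Q1 s a - Tcon c γ R pbar Q2 s a
      = γ * (1 - R) * (∑ s', pbar s a s' * (Vq Q1 s' - Vq Q2 s'))
        + γ * R * (Finset.univ.sup' Finset.univ_nonempty (Vq Q1)
            - Finset.univ.sup' Finset.univ_nonempty (Vq Q2)) := by
    simp only [Tcon, mul_sub, Finset.sum_sub_distrib]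
    ring
  rw [hdiff]
  have hsum : |∑ s', pbar s a s' * (Vq Q1 s' - Vq Q2 s')| ≤ M := by
    calc |∑ s', pbar s a s' * (Vq Q1 s' - Vq Q2 s')|
        ≤ ∑ s', |pbar s a s' * (Vq Q1 s' - Vq Q2 s')| := Finset.abs_sum_le_sum_abs _ _
      _ ≤ ∑ s', pbar s a s' * M := by
          apply Finset.sum_le_sum
          intro s' _
          rw [abs_mul, abs_of_nonneg (hp_nonneg s a s')]
          exact mul_le_mul_of_nonneg_left (Vq_abs_le Q1 Q2 s') (hp_nonneg s a s')
      _ = M := by rw [← Finset.sum_mul, hp_sum, one_mul]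
  have hsup := sup'_Vq_abs_le Q1 Q2
  calc |γ * (1 - R) * (∑ s', pbar s a s' * (Vq Q1 s' - Vq Q2 s'))
        + γ * R * (Finset.univ.sup' Finset.univ_nonempty (Vq Q1)
            - Finset.univ.sup' Finset.univ_nonempty (Vq Q2))|
      ≤ γ * (1 - R) * |∑ s', pbar s a s' * (Vq Q1 s' - Vq Q2 s')|
        + γ * R * |Finset.univ.sup' Finset.univ_nonempty (Vq Q1)
            - Finset.univ.sup' Finset.univ_nonempty (Vq Q2)| := by
        refine (abs_add_le _ _).trans ?_
        rw [abs_mul (γ * (1 - R)), abs_mul (γ * R),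
          abs_of_nonneg (show (0:ℝ) ≤ γ * (1 - R) by nlinarith),
          abs_of_nonneg (show (0:ℝ) ≤ γ * R by positivity)]
    _ ≤ γ * (1 - R) * M + γ * R * M := by
        have e1 := mul_le_mul_of_nonneg_left hsum (show (0:ℝ) ≤ γ * (1 - R) by nlinarith)
        have e2 := mul_le_mul_of_nonneg_left hsup (show (0:ℝ) ≤ γ * R by positivity)
        rw [← hM] at e2
        linarith
    _ = γ * M := by ring
end

section
/- (Lemma 3.) Under the setting of the ARQ-Learning error decomposition, assume additionally that α ∈ [0,1] and that for every s ∈ S some maximizer of V⋆ over N_s belongs to N̂_s (Assumption 2). Then for every t ≥ 1 and every (s,a) ∈ S × A, |β_{3,t}(s,a)| ≤ γ ∑_{i=1}^{t} ‖ψ_{i−1}‖∞ · α χ_i(s,a) · ∏_{j=i+1}^{t} (1 − α χ_j(s,a)), where ψ_{i−1} = Q_{i−1} − Q⋆ and ‖·‖∞ is the maximum of the absolute value over S × A. -/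
open Finset

/-!
Both terms of `β₃` are weighted sums of errors bounded by `‖ψ_{i-1}‖∞`: `V_Q` is 1-Lipschitz for
the sup norm, so an average of `V_{i-1} - V⋆` under `P_i` is bounded by it, and so is the gap
between the two maxima, because a maximizer of `V⋆` over `N_s` already lies in `N̂_s`. The weights
`α χ_i ∏ (1 - α χ_j)` are nonnegative and `1 - R`, `R` are convex weights, so `β₃` is `γ` times a
nonnegative combination of convex combinations of these errors.
-/

namespace Finset

variable {ι : Type*}

lemma abs_inf'_sub_inf'_le {s : Finset ι} (hs : s.Nonempty) {f g : ι → ℝ} {C : ℝ}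
    (hfg : ∀ i ∈ s, |f i - g i| ≤ C) : |s.inf' hs f - s.inf' hs g| ≤ C := by
  obtain ⟨i, hi, hgi⟩ := exists_mem_eq_inf' hs g
  obtain ⟨j, hj, hfj⟩ := exists_mem_eq_inf' hs f
  have hfi : s.inf' hs f ≤ f i := inf'_le f hi
  have hgj : s.inf' hs g ≤ g j := inf'_le g hj
  have hi' := abs_le.mp (hfg i hi)
  have hj' := abs_le.mp (hfg j hj)
  rw [abs_le]
  constructor <;> linarith

lemma abs_sup'_sub_sup'_le_of_subset {s t : Finset ι} (hs : s.Nonempty) (ht : t.Nonempty)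
    {f g : ι → ℝ} {C : ℝ} (hst : s ⊆ t) {x : ι} (hx : x ∈ s) (hgx : g x = t.sup' ht g)
    (hfg : ∀ i ∈ s, |f i - g i| ≤ C) : |s.sup' hs f - t.sup' ht g| ≤ C := by
  rw [abs_le]
  constructor
  · have hfx : f x ≤ s.sup' hs f := le_sup' f hx
    linarith [(abs_le.mp (hfg x hx)).1]
  · have hf_le : s.sup' hs f ≤ t.sup' ht g + C := by
      refine sup'_le hs f fun i hi => ?_
      have hgi : g i ≤ t.sup' ht g := le_sup' g (hst hi)
      linarith [(abs_le.mp (hfg i hi)).2]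
    linarith

lemma abs_sum_mul_le_sum_mul (T : Finset ι) {w f g : ι → ℝ}
    (hw : ∀ i ∈ T, 0 ≤ w i) (hfg : ∀ i ∈ T, |f i| ≤ g i) :
    |∑ i ∈ T, w i * f i| ≤ ∑ i ∈ T, w i * g i := by
  refine (abs_sum_le_sum_abs _ _).trans (sum_le_sum fun i hi => ?_)
  rw [abs_mul, abs_of_nonneg (hw i hi)]
  exact mul_le_mul_of_nonneg_left (hfg i hi) (hw i hi)

lemma abs_sum_mul_le_of_sum_eq_one (T : Finset ι) {w f : ι → ℝ} {C : ℝ}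
    (hw : ∀ i ∈ T, 0 ≤ w i) (hw_sum : ∑ i ∈ T, w i = 1) (hf : ∀ i ∈ T, |f i| ≤ C) :
    |∑ i ∈ T, w i * f i| ≤ C := by
  simpa [← sum_mul, hw_sum] using abs_sum_mul_le_sum_mul T hw hf

lemma mul_prod_one_sub_nonneg {x : ℕ → ℝ} (hx0 : ∀ j, 0 ≤ x j) (hx1 : ∀ j, x j ≤ 1)
    (i t : ℕ) : 0 ≤ x i * ∏ j ∈ Icc (i + 1) t, (1 - x j) :=
  mul_nonneg (hx0 i) (prod_nonneg fun j _ => sub_nonneg.mpr (hx1 j))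

end Finset

lemma abs_one_sub_mul_add_mul_le {R u v C : ℝ} (hR0 : 0 ≤ R) (hR1 : R ≤ 1)
    (hu : |u| ≤ C) (hv : |v| ≤ C) : |(1 - R) * u + R * v| ≤ C := by
  calc |(1 - R) * u + R * v| ≤ (1 - R) * |u| + R * |v| := by
        refine (abs_add_le _ _).trans_eq ?_
        rw [abs_mul, abs_mul, abs_of_nonneg (sub_nonneg.mpr hR1), abs_of_nonneg hR0]
    _ ≤ (1 - R) * C + R * C := by gcongr
    _ = C := by ring

lemma abs_weighted_mix_le {ι : Type*} (T : Finset ι) (w u v C : ι → ℝ) {γ R : ℝ}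
    (hγ : 0 ≤ γ) (hR0 : 0 ≤ R) (hR1 : R ≤ 1) (hw : ∀ i ∈ T, 0 ≤ w i)
    (hu : ∀ i ∈ T, |u i| ≤ C i) (hv : ∀ i ∈ T, |v i| ≤ C i) :
    |γ * (1 - R) * ∑ i ∈ T, w i * u i + γ * R * ∑ i ∈ T, w i * v i|
      ≤ γ * ∑ i ∈ T, C i * w i := by
  have hmix : γ * (1 - R) * ∑ i ∈ T, w i * u i + γ * R * ∑ i ∈ T, w i * v i
      = γ * ∑ i ∈ T, w i * ((1 - R) * u i + R * v i) := by
    simp only [mul_sum, ← sum_add_distrib]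
    exact sum_congr rfl fun i _ => by ring
  rw [hmix, abs_mul, abs_of_nonneg hγ]
  gcongr
  simp only [mul_comm (C _)]
  exact abs_sum_mul_le_sum_mul T hw fun i hi => abs_one_sub_mul_add_mul_le hR0 hR1 (hu i hi) (hv i hi)

section ValueFunction

variable {S A : Type*} [Fintype S] [Fintype A] [Nonempty S] [Nonempty A]

lemma abs_le_supNorm (Q : S → A → ℝ) (s : S) (a : A) : |Q s a| ≤ supNorm Q :=
  le_sup' (fun p : S × A => |Q p.1 p.2|) (mem_univ (s, a))

lemma abs_Vq_sub_Vq_le_supNorm (Q Q' : S → A → ℝ) (s : S) :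
    |Vq Q s - Vq Q' s| ≤ supNorm (fun s' a' => Q s' a' - Q' s' a') :=
  abs_inf'_sub_inf'_le _ fun a _ => abs_le_supNorm (fun s' a' => Q s' a' - Q' s' a') s a

end ValueFunction

theorem arq_beta3_bound_general
    {S A : Type*} [Fintype S] [Fintype A] [Nonempty S] [Nonempty A]
    (γ R α : ℝ) (hγ0 : 0 < γ) (hR0 : 0 ≤ R) (hR1 : R ≤ 1)
    (hα0 : 0 ≤ α) (hα1 : α ≤ 1)
    (pbar : S → A → S → ℝ)
    (hself : ∀ s : S, s ∈ nbr pbar s)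
    (Nhat : S → Finset S) (hNhat_sub : ∀ s, Nhat s ⊆ nbr pbar s)
    (hNhat_ne : ∀ s, (Nhat s).Nonempty)
    (χ : ℕ → S → A → ℝ) (hχ : ∀ t s a, χ t s a = 0 ∨ χ t s a = 1)
    (P : ℕ → S → A → S → ℝ)
    (hP_nonneg : ∀ t s a s', 0 ≤ P t s a s')
    (hP_sum : ∀ t s a, ∑ s', P t s a s' = 1)
    (Q : ℕ → S → A → ℝ) (Qstar : S → A → ℝ)
    -- Assumption 2: a maximizer of `V⋆` over `N_s` belongs to `N̂_s`.
    (hass2 : ∀ s : S, ∃ sstar ∈ Nhat s,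
      Vq Qstar sstar = (nbr pbar s).sup' ⟨s, hself s⟩ (Vq Qstar)) :
    ∀ (t : ℕ), 1 ≤ t → ∀ (s : S) (a : A),
      |γ * (1 - R) * (∑ i ∈ Finset.Icc 1 t,
            α * χ i s a * (∏ j ∈ Finset.Icc (i + 1) t, (1 - α * χ j s a))
              * (∑ s', P i s a s' * (Vq (Q (i - 1)) s' - Vq Qstar s')))
        + γ * R * (∑ i ∈ Finset.Icc 1 t,
            α * χ i s a * (∏ j ∈ Finset.Icc (i + 1) t, (1 - α * χ j s a))
              * ((Nhat s).sup' (hNhat_ne s) (Vq (Q (i - 1)))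
                  - (nbr pbar s).sup' ⟨s, hself s⟩ (Vq Qstar)))|
      ≤ γ * ∑ i ∈ Finset.Icc 1 t,
          supNorm (fun s' a' => Q (i - 1) s' a' - Qstar s' a')
            * (α * χ i s a) * (∏ j ∈ Finset.Icc (i + 1) t, (1 - α * χ j s a)) := by
  intro t _ s a
  have hstep : ∀ j, 0 ≤ α * χ j s a ∧ α * χ j s a ≤ 1 := fun j => by
    rcases hχ j s a with h | h <;> simp [h, hα0, hα1]
  have hV : ∀ i s', |Vq (Q (i - 1)) s' - Vq Qstar s'|
      ≤ supNorm (fun s' a' => Q (i - 1) s' a' - Qstar s' a') :=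
    fun i => abs_Vq_sub_Vq_le_supNorm _ _
  obtain ⟨sstar, hsstar, hmax⟩ := hass2 s
  refine (abs_weighted_mix_le (Icc 1 t)
    (fun i => α * χ i s a * ∏ j ∈ Icc (i + 1) t, (1 - α * χ j s a))
    (fun i => ∑ s', P i s a s' * (Vq (Q (i - 1)) s' - Vq Qstar s'))
    (fun i => (Nhat s).sup' (hNhat_ne s) (Vq (Q (i - 1)))
      - (nbr pbar s).sup' ⟨s, hself s⟩ (Vq Qstar))
    (fun i => supNorm (fun s' a' => Q (i - 1) s' a' - Qstar s' a'))
    hγ0.le hR0 hR1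
    (fun i _ => mul_prod_one_sub_nonneg (fun j => (hstep j).1) (fun j => (hstep j).2) i t)
    (fun i _ => abs_sum_mul_le_of_sum_eq_one univ (fun s' _ => hP_nonneg i s a s')
      (hP_sum i s a) fun s' _ => hV i s')
    (fun i _ => abs_sup'_sub_sup'_le_of_subset _ _ (hNhat_sub s) hsstar hmax
      fun s' _ => hV i s')).trans_eq ?_
  simp only [mul_assoc]

/-- Lemma 3: bound on `β_{3,t}` in the ARQ-Learning error decomposition. -/
theorem arq_beta3_bound
    {S A : Type*} [Fintype S] [Fintype A] [Nonempty S] [Nonempty A]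
    (c : S → A → ℝ) (γ R α : ℝ) (hγ0 : 0 < γ) (hγ1 : γ < 1) (hR0 : 0 ≤ R) (hR1 : R ≤ 1)
    (hα0 : 0 ≤ α) (hα1 : α ≤ 1)
    (pbar : S → A → S → ℝ)
    (hp_nonneg : ∀ s a s', 0 ≤ pbar s a s')
    (hp_sum : ∀ s a, ∑ s', pbar s a s' = 1)
    (hself : ∀ s : S, s ∈ nbr pbar s)
    (Nhat : S → Finset S) (hNhat_sub : ∀ s, Nhat s ⊆ nbr pbar s)
    (hNhat_ne : ∀ s, (Nhat s).Nonempty)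
    (χ : ℕ → S → A → ℝ) (hχ : ∀ t s a, χ t s a = 0 ∨ χ t s a = 1)
    (P : ℕ → S → A → S → ℝ)
    (hP_nonneg : ∀ t s a s', 0 ≤ P t s a s')
    (hP_sum : ∀ t s a, ∑ s', P t s a s' = 1)
    (Q : ℕ → S → A → ℝ) (Qstar : S → A → ℝ)
    (hrec : ∀ t : ℕ, 1 ≤ t → ∀ s a,
      Q t s a = (1 - α * χ t s a) * Q (t - 1) s a
        + α * χ t s a * (c s a
            + γ * (1 - R) * (∑ s', P t s a s' * Vq (Q (t - 1)) s')
            + γ * R * (Nhat s).sup' (hNhat_ne s) (Vq (Q (t - 1)))))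
    (hfix : ∀ s a,
      Qstar s a = c s a + γ * (1 - R) * (∑ s', pbar s a s' * Vq Qstar s')
        + γ * R * (nbr pbar s).sup' ⟨s, hself s⟩ (Vq Qstar))
    -- Assumption 2: a maximizer of `V⋆` over `N_s` belongs to `N̂_s`.
    (hass2 : ∀ s : S, ∃ sstar ∈ Nhat s,
      Vq Qstar sstar = (nbr pbar s).sup' ⟨s, hself s⟩ (Vq Qstar)) :
    ∀ (t : ℕ), 1 ≤ t → ∀ (s : S) (a : A),
      |γ * (1 - R) * (∑ i ∈ Finset.Icc 1 t,
            α * χ i s a * (∏ j ∈ Finset.Icc (i + 1) t, (1 - α * χ j s a))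
              * (∑ s', P i s a s' * (Vq (Q (i - 1)) s' - Vq Qstar s')))
        + γ * R * (∑ i ∈ Finset.Icc 1 t,
            α * χ i s a * (∏ j ∈ Finset.Icc (i + 1) t, (1 - α * χ j s a))
              * ((Nhat s).sup' (hNhat_ne s) (Vq (Q (i - 1)))
                  - (nbr pbar s).sup' ⟨s, hself s⟩ (Vq Qstar)))|
      ≤ γ * ∑ i ∈ Finset.Icc 1 t,
          supNorm (fun s' a' => Q (i - 1) s' a' - Qstar s' a')
            * (α * χ i s a) * (∏ j ∈ Finset.Icc (i + 1) t, (1 - α * χ j s a)) :=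
  arq_beta3_bound_general γ R α hγ0 hR0 hR1 hα0 hα1 pbar hself Nhat hNhat_sub hNhat_ne χ hχ P
    hP_nonneg hP_sum Q Qstar hass2
end
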